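/- Let R be a unital non-associative ring, G a commutative monoid, π a strong G-derivation on R, and S = R[G;π] the Ore monoid ring. If s ∈ S^G, then s ∈ Z(S) if and only if s commutes and associates with all elements of R, i.e. for all r,t ∈ R one has [s,r] = 0 and (s,r,t) = (r,s,t) = (r,t,s) = 0. -/

import Mathlib

open scoped Classical

/-! Common framework: Ore monoid rings `R[G;π]` over a unital non-associative ring `R`
and a monoid `G`.  A `G`-derivation `π = {π^a_b}` is encoded as a map
`π : G → R → (G →₀ R)`, where `π a r b = π^a_b(r)`; axiom (D0) (finite support in `b`)
is built into the `Finsupp` encoding.  The Ore monoid ring `S = R[G;π]` is the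
additive group `G →₀ R` of finitely supported formal sums `Σ r_a xᵃ`
(with `Finsupp.single a r` representing `r xᵃ`), equipped with the
multiplication `GDeriv.mul` below. -/

/-- A two-sided ideal with respect to a (possibly non-associative, non-unital)
multiplication `m` on an additive group `A`. -/
structure IsIdealWith {A : Type*} [AddCommGroup A] (m : A → A → A) (J : Set A) : Prop where
  zero_mem : (0 : A) ∈ J
  add_mem : ∀ {x y : A}, x ∈ J → y ∈ J → x + y ∈ J
  neg_mem : ∀ {x : A}, x ∈ J → -x ∈ J
  mul_mem_left : ∀ (r : A) {x : A}, x ∈ J → m r x ∈ J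
  mul_mem_right : ∀ {x : A} (r : A), x ∈ J → m x r ∈ J

/-- The subset `F` of `A` is a field with respect to the multiplication `m` with
identity `one`: it is a commutative unital subring in which every nonzero element
has a multiplicative inverse. -/
def IsFieldWith {A : Type*} [AddCommGroup A] (m : A → A → A) (one : A) (F : Set A) : Prop :=
  one ∈ F ∧ (∀ x ∈ F, ∀ y ∈ F, x + y ∈ F) ∧ (∀ x ∈ F, -x ∈ F) ∧
  (∀ x ∈ F, ∀ y ∈ F, m x y ∈ F) ∧ (∀ x ∈ F, ∀ y ∈ F, m x y = m y x) ∧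
  (∀ x ∈ F, x ≠ 0 → ∃ y ∈ F, m x y = one ∧ m y x = one)

/-- A `G`-derivation on `R`: axioms (D0)–(D4).  Here `π a r b` denotes `π^a_b(r)`,
and (D0) holds by the finite support of `π a r : G →₀ R`. -/
structure GDeriv (R : Type*) [NonAssocRing R] (G : Type*) [Monoid G] where
  /-- the family of maps; `π a r b = π^a_b(r)` -/
  π : G → R → (G →₀ R)
  /-- (D1): `π^e_e = id` and `π^e_a = 0` for `a ≠ e` -/
  d1 : ∀ r : R, π 1 r = Finsupp.single 1 r
  /-- (D2): `π^a_b(1) = δ_{a,b}` -/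
  d2 : ∀ a : G, π a (1 : R) = Finsupp.single a (1 : R)
  /-- (D3): each `π^a_b` is additive -/
  d3 : ∀ (a : G) (r s : R), π a (r + s) = π a r + π a s
  /-- (D4): `π^{ab}_c = Σ_{df = c} π^a_d ∘ π^b_f` -/
  d4 : ∀ (a b : G) (r : R),
    π (a * b) r = (π b r).sum fun f s => (π a s).sum fun d t => Finsupp.single (d * f) t

namespace GDeriv

variable {R : Type*} [NonAssocRing R] {G : Type*} [Monoid G] (P : GDeriv R G)

/-- The multiplication of the Ore monoid ring `S = R[G;π]` on `G →₀ R`: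
the biadditive extension of `(r xᵃ)(s xᵇ) = Σ_c r π^a_c(s) x^{cb}`. -/
noncomputable def mul (u v : G →₀ R) : G →₀ R :=
  u.sum fun a r => v.sum fun b s => (P.π a s).sum fun c t => Finsupp.single (c * b) (r * t)

/-- The multiplicative identity `1·xᵉ` of `S`. -/
noncomputable def one (_P : GDeriv R G) : G →₀ R := Finsupp.single 1 1

/-- `R^G = {r ∈ R : π^a_b(r) = δ_{a,b} r}`. -/
def fixed : Set R := {r | ∀ a : G, P.π a r = Finsupp.single a r}

/-- `S^G = Σ_a R^G xᵃ`, the elements of `S` all of whose coefficients lie in `R^G`. -/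
def fixedS : Set (G →₀ R) := {u | ∀ c : G, u c ∈ P.fixed}

/-- (D7): every `π^a_b` is left `R^G`-linear. -/
def LeftLinear : Prop := ∀ a b : G, ∀ s ∈ P.fixed, ∀ r : R, P.π a (s * r) b = s * P.π a r b

/-- (D8): every `π^a_b` is right `R^G`-linear. -/
def RightLinear : Prop := ∀ a b : G, ∀ r : R, ∀ s ∈ P.fixed, P.π a (r * s) b = P.π a r b * s

/-- `π` is strong if (D7) or (D8) holds. -/
def Strong : Prop := P.LeftLinear ∨ P.RightLinear

/-- (D6): `π^a_a = id_R` for all `a ∈ G` (i.e. `π` is unital). -/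
def Unital : Prop := ∀ (a : G) (r : R), P.π a r a = r

/-- `π` is commutative: `π^a_b ∘ π^c_d = π^c_d ∘ π^a_b`. -/
def Commutes : Prop := ∀ (a b c d : G) (r : R), P.π a (P.π c r d) b = P.π c (P.π a r b) d

/-- `π` is well-ordered: there is a well-order on `G` whose strict part `lt`
satisfies `π^a_b = 0` whenever `a ≺ b`. -/
def WellOrdered : Prop :=
  ∃ lt : G → G → Prop, IsWellOrder G lt ∧ ∀ a b : G, lt a b → ∀ r : R, P.π a r b = 0

/-- The extension `π̃^a_b : S → S`, `π̃^a_b(Σ_c r_c x^c) = Σ_c π^a_b(r_c) x^c`. -/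
noncomputable def ext (a b : G) (u : G →₀ R) : G →₀ R := u.sum fun c r => Finsupp.single c (P.π a r b)

/-- The commutator `[u,v] = uv - vu` in `S`. -/
noncomputable def commS (u v : G →₀ R) : G →₀ R := P.mul u v - P.mul v u

/-- The associator `(u,v,w) = (uv)w - u(vw)` in `S`. -/
noncomputable def assocS (u v w : G →₀ R) : G →₀ R := P.mul (P.mul u v) w - P.mul u (P.mul v w)

/-- The left nucleus `N_l(S)`. -/
def Nl : Set (G →₀ R) := {u | ∀ v w, P.assocS u v w = 0}

/-- The middle nucleus `N_m(S)`. -/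
def Nm : Set (G →₀ R) := {u | ∀ v w, P.assocS v u w = 0}

/-- The right nucleus `N_r(S)`. -/
def Nr : Set (G →₀ R) := {u | ∀ v w, P.assocS v w u = 0}

/-- The commuter `C(S)`. -/
def CS : Set (G →₀ R) := {u | ∀ v, P.mul u v = P.mul v u}

/-- The center `Z(S) = C(S) ∩ N_l(S) ∩ N_m(S) ∩ N_r(S)`. -/
def Z : Set (G →₀ R) := P.CS ∩ (P.Nl ∩ P.Nm ∩ P.Nr)

/-- `Z(S)^G = {s ∈ Z(S) : π̃^a_b(s) = δ_{a,b} s}`. -/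
def ZG : Set (G →₀ R) :=
  {s | s ∈ P.Z ∧ ∀ a b : G, P.ext a b s = if a = b then s else 0}

/-- `R` is `G`-simple: `{0}` and `R` are the only `G`-invariant ideals of `R`. -/
def RSimple : Prop :=
  ∀ J : Set R, IsIdealWith (· * ·) J → (∀ a b : G, ∀ r ∈ J, P.π a r b ∈ J) →
    J = {0} ∨ J = Set.univ

/-- `S` is `G`-simple: `{0}` and `S` are the only ideals of `S` invariant under all `π̃^a_b`. -/
def SSimple : Prop :=
  ∀ J : Set (G →₀ R), IsIdealWith P.mul J → (∀ a b : G, ∀ u ∈ J, P.ext a b u ∈ J) →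
    J = {0} ∨ J = Set.univ

end GDeriv

/-! For `s ∈ S^G`, right multiplication by `s` is plain convolution: `(r xᵃ) s = Σ_h r s_h x^{ah}`.
Together with (D4) this shows that `((r xᵃ) s)(t xᵇ)` and `((r xᵃ)(t xᵇ)) s` are obtained from the
corresponding products with `a = b = e` by one and the same recipe, `liftMonomial`: expand `π^a(t)`
and shift degrees. The same holds for `(r xᵃ)(s (t xᵇ))`, which is where strongness is needed:
(D7), resp. (D8), moves the coefficients of `s` through `π^a`. Hence `s v = v s`,
`(v s) w = (v w) s` and `(v s) w = v (s w)` reduce by biadditivity to `v, w ∈ R`, where they are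
the hypotheses; these three identities make every associator involving `s` vanish. -/

open Finsupp

namespace GDeriv

section Monoid

variable {R : Type*} [NonAssocRing R] {G : Type*} [Monoid G] (P : GDeriv R G)

theorem pi_zero (a : G) : P.π a 0 = 0 :=
  (AddMonoidHom.mk' (P.π a) (P.d3 a)).map_zero

theorem mul_single_single (a : G) (r : R) (b : G) (t : R) :
    P.mul (single a r) (single b t) = (P.π a t).sum fun c w => single (c * b) (r * w) := by
  rw [mul, sum_single_index (by simp), sum_single_index (by simp [pi_zero])]

theorem add_mul (u v w : G →₀ R) : P.mul (u + v) w = P.mul u w + P.mul v w :=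
  sum_add_index' (by simp) fun a r₁ r₂ => by
    simp only [← sum_add, _root_.add_mul, single_add]

theorem mul_add (u v w : G →₀ R) : P.mul u (v + w) = P.mul u v + P.mul u w := by
  simp only [mul, ← sum_add]
  refine sum_congr fun a _ => sum_add_index' (by simp [pi_zero]) fun b t₁ t₂ => ?_
  rw [P.d3]
  exact sum_add_index' (by simp) fun c w₁ w₂ => by rw [_root_.mul_add, single_add]

noncomputable def mulHom : (G →₀ R) →+ (G →₀ R) →+ (G →₀ R) :=
  AddMonoidHom.mk' (fun u => AddMonoidHom.mk' (P.mul u) (P.mul_add u)) fun u v =>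
    AddMonoidHom.ext fun w => P.add_mul u v w

@[simp]
theorem mulHom_apply (u v : G →₀ R) : P.mulHom u v = P.mul u v := rfl

theorem sum_mul (u : G →₀ R) (f : G → R → G →₀ R) (v : G →₀ R) :
    P.mul (u.sum f) v = u.sum fun a r => P.mul (f a r) v :=
  map_finsuppSum (P.mulHom.flip v) u f

theorem mul_sum (u : G →₀ R) (v : G →₀ R) (f : G → R → G →₀ R) :
    P.mul u (v.sum f) = v.sum fun a r => P.mul u (f a r) :=
  map_finsuppSum (P.mulHom u) v f

theorem single_one_mul_single (r : R) (b : G) (t : R) :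
    P.mul (single 1 r) (single b t) = single b (r * t) := by
  rw [mul_single_single, P.d1, sum_single_index (by simp), one_mul]

theorem mapDomain_mul_right_single_one (a : G) (r : R) :
    mapDomain (· * a) (single 1 r) = single a r := by
  rw [mapDomain_single, one_mul]

theorem mul_mapDomain_mul_right (u v : G →₀ R) (b : G) :
    P.mul u (mapDomain (· * b) v) = mapDomain (· * b) (P.mul u v) := by
  induction u using Finsupp.induction_linear with
  | zero => simp [mul]
  | add u₁ u₂ h₁ h₂ => rw [add_mul, add_mul, h₁, h₂, mapDomain_add]
  | single a r =>
    induction v using Finsupp.induction_linear with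
    | zero => simp [mul]
    | add v₁ v₂ h₁ h₂ => rw [mapDomain_add, mul_add, mul_add, h₁, h₂, mapDomain_add]
    | single c w =>
      simp only [mapDomain_single, mul_single_single, mapDomain_sum, mul_assoc]

theorem mapDomain_mul_right_mul_single_one (u : G →₀ R) (a : G) (t : R) :
    P.mul (mapDomain (· * a) u) (single 1 t) =
      (P.π a t).sum fun f w => mapDomain (· * f) (P.mul u (single 1 w)) := by
  induction u using Finsupp.induction_linear with
  | zero => simp [mul]
  | add u₁ u₂ h₁ h₂ => simp only [mapDomain_add, add_mul, h₁, h₂, ← sum_add]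
  | single h q =>
    rw [mapDomain_single, mul_single_single, P.d4,
      sum_sum_index (by simp) (by simp [_root_.mul_add, single_add])]
    refine sum_congr fun f _ => ?_
    rw [mul_single_single, mapDomain_sum,
      sum_sum_index (by simp) (by simp [_root_.mul_add, single_add])]
    exact sum_congr fun d _ => by
      rw [sum_single_index (by simp), mapDomain_single, mul_one, mul_one]

noncomputable def liftMonomial (Φ : R → G →₀ R) (a b : G) (t : R) : G →₀ R :=
  mapDomain (· * b) ((P.π a t).sum fun f w => mapDomain (· * f) (Φ w))

theorem mapDomain_mul_right_mul_single (u : G →₀ R) (a b : G) (t : R) :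
    P.mul (mapDomain (· * a) u) (single b t) =
      P.liftMonomial (fun w => P.mul u (single 1 w)) a b t := by
  rw [← mapDomain_mul_right_single_one b t, mul_mapDomain_mul_right,
    mapDomain_mul_right_mul_single_one, liftMonomial]

variable {P}

theorem pi_mul_of_leftLinear (hP : P.LeftLinear) {q : R} (hq : q ∈ P.fixed) (a : G) (t : R) :
    P.π a (q * t) = mapRange (q * ·) (mul_zero q) (P.π a t) :=
  Finsupp.ext fun c => hP a c q hq t

theorem pi_mul_of_rightLinear (hP : P.RightLinear) {q : R} (hq : q ∈ P.fixed) (a : G) (t : R) :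
    P.π a (t * q) = mapRange (· * q) (zero_mul q) (P.π a t) :=
  Finsupp.ext fun c => hP a c t q hq

theorem single_mul_of_mem_fixedS {s : G →₀ R} (hs : s ∈ P.fixedS) (a : G) (r : R) :
    P.mul (single a r) s = s.sum fun h q => single (a * h) (r * q) := by
  rw [mul, sum_single_index (by simp)]
  exact sum_congr fun h _ => by rw [hs h a, sum_single_index (by simp)]

theorem single_mul_single_mul_single_one_of_leftLinear (hP : P.LeftLinear) {q : R}
    (hq : q ∈ P.fixed) (a : G) (r : R) (h : G) (t : R) :
    P.mul (single a r) (P.mul (single h q) (single 1 t)) =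
      P.mul (single 1 r) (P.mul (single (a * h) q) (single 1 t)) := by
  rw [mul_single_single, mul_single_single, P.d4,
    sum_sum_index (by simp) (by simp [_root_.mul_add, single_add]), P.mul_sum, P.mul_sum]
  refine sum_congr fun c _ => ?_
  rw [mul_single_single, pi_mul_of_leftLinear hP hq, sum_mapRange_index (by simp),
    sum_sum_index (by simp) (by simp [_root_.mul_add, single_add]), P.mul_sum]
  refine sum_congr fun d _ => ?_
  rw [sum_single_index (by simp), single_one_mul_single, mul_one, mul_one]

theorem single_mul_single_mul_of_rightLinear (hP : P.RightLinear) {q : R} (hq : q ∈ P.fixed)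
    (a : G) (r : R) (h : G) (t : R) :
    P.mul (single a r) (single h (t * q)) =
      (P.π a t).sum fun f w => single (f * h) (r * (w * q)) := by
  rw [mul_single_single, pi_mul_of_rightLinear hP hq, sum_mapRange_index (by simp)]

end Monoid

section CommMonoid

variable {R : Type*} [NonAssocRing R] {G : Type*} [CommMonoid G] {P : GDeriv R G}
  {s : G →₀ R}

theorem mapDomain_mul_right_mul_of_mem_fixedS (hs : s ∈ P.fixedS) (u : G →₀ R) (b : G) :
    P.mul (mapDomain (· * b) u) s = mapDomain (· * b) (P.mul u s) := by
  induction u using Finsupp.induction_linear with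
  | zero => simp [mul]
  | add u₁ u₂ h₁ h₂ => rw [mapDomain_add, add_mul, add_mul, h₁, h₂, mapDomain_add]
  | single a r =>
    simp only [mapDomain_single, single_mul_of_mem_fixedS hs, mapDomain_sum, mul_right_comm]

theorem liftMonomial_mul_of_mem_fixedS (hs : s ∈ P.fixedS) (Φ : R → G →₀ R) (a b : G)
    (t : R) :
    P.mul (P.liftMonomial Φ a b t) s = P.liftMonomial (fun w => P.mul (Φ w) s) a b t := by
  simp only [liftMonomial, mapDomain_mul_right_mul_of_mem_fixedS hs, P.sum_mul]

theorem single_mul_mul_single_of_mem_fixedS (hs : s ∈ P.fixedS) (a : G) (r : R) (b : G)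
    (t : R) :
    P.mul (P.mul (single a r) s) (single b t) =
      P.liftMonomial (fun w => P.mul (P.mul (single 1 r) s) (single 1 w)) a b t := by
  rw [← mapDomain_mul_right_single_one a r, mapDomain_mul_right_mul_of_mem_fixedS hs,
    mapDomain_mul_right_mul_single]

theorem single_mul_single_mul_of_mem_fixedS (hs : s ∈ P.fixedS) (a : G) (r : R) (b : G)
    (t : R) :
    P.mul (P.mul (single a r) (single b t)) s =
      P.liftMonomial (fun w => P.mul (P.mul (single 1 r) (single 1 w)) s) a b t := by
  rw [← mapDomain_mul_right_single_one a r, mapDomain_mul_right_mul_single,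
    liftMonomial_mul_of_mem_fixedS hs]

theorem single_mul_mul_single_one_of_strong (hP : P.Strong) (hs : s ∈ P.fixedS)
    (hc : ∀ r : R, P.mul s (single 1 r) = P.mul (single 1 r) s) (a : G) (r t : R) :
    P.mul (single a r) (P.mul s (single 1 t)) =
      (P.π a t).sum fun f w => mapDomain (· * f) (P.mul (single 1 r) (P.mul s (single 1 w))) := by
  rcases hP with hL | hR
  · rw [← sum_single s]
    simp only [P.sum_mul, P.mul_sum, mapDomain_sum]
    refine (sum_congr fun h _ => ?_).trans (sum_comm _ _ _)
    have hshift : single (h * a) (s h) = mapDomain (· * a) (single h (s h)) := by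
      rw [mapDomain_single]
    rw [single_mul_single_mul_single_one_of_leftLinear hL (hs h), mul_comm a h, hshift,
      mapDomain_mul_right_mul_single_one, P.mul_sum]
    exact sum_congr fun f _ => mul_mapDomain_mul_right _ _ _ _
  · simp only [hc, single_mul_of_mem_fixedS hs, one_mul, P.mul_sum, single_one_mul_single,
      mapDomain_sum, mapDomain_single]
    refine (sum_congr fun h _ => ?_).trans (sum_comm _ _ _)
    rw [single_mul_single_mul_of_rightLinear hR (hs h)]
    exact sum_congr fun f _ => by rw [mul_comm f h]

theorem single_mul_mul_single_of_strong (hP : P.Strong) (hs : s ∈ P.fixedS)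
    (hc : ∀ r : R, P.mul s (single 1 r) = P.mul (single 1 r) s) (a : G) (r : R) (b : G) (t : R) :
    P.mul (single a r) (P.mul s (single b t)) =
      P.liftMonomial (fun w => P.mul (single 1 r) (P.mul s (single 1 w))) a b t := by
  rw [← mapDomain_mul_right_single_one b t, mul_mapDomain_mul_right, mul_mapDomain_mul_right,
    single_mul_mul_single_one_of_strong hP hs hc, liftMonomial]

theorem mul_comm_of_mem_fixedS (hs : s ∈ P.fixedS)
    (hc : ∀ r : R, P.mul s (single 1 r) = P.mul (single 1 r) s) (v : G →₀ R) :
    P.mul s v = P.mul v s := by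
  have key : P.mulHom s = P.mulHom.flip s := addHom_ext fun b t => by
    simp only [mulHom_apply, AddMonoidHom.flip_apply]
    rw [← mapDomain_mul_right_single_one b t, mul_mapDomain_mul_right, hc,
      mapDomain_mul_right_mul_of_mem_fixedS hs]
  exact DFunLike.congr_fun key v

theorem mul_mul_right_comm_of_mem_fixedS (hs : s ∈ P.fixedS)
    (hc : ∀ r : R, P.mul s (single 1 r) = P.mul (single 1 r) s)
    (hA : ∀ r t : R,
      P.mul (P.mul s (single 1 r)) (single 1 t) = P.mul s (P.mul (single 1 r) (single 1 t)))
    (v w : G →₀ R) : P.mul (P.mul v s) w = P.mul (P.mul v w) s := by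
  have key : P.mulHom.comp (P.mulHom.flip s) = P.mulHom.compr₂ (P.mulHom.flip s) :=
    addHom_ext fun a r => addHom_ext fun b t => by
      simp only [AddMonoidHom.comp_apply, AddMonoidHom.compr₂_apply, AddMonoidHom.flip_apply,
        mulHom_apply]
      rw [single_mul_mul_single_of_mem_fixedS hs, single_mul_single_mul_of_mem_fixedS hs]
      congr! 2 with w
      rw [← hc, hA, single_one_mul_single, hc]
  exact DFunLike.congr_fun (DFunLike.congr_fun key v) w

theorem mul_mul_assoc_of_mem_fixedS (hP : P.Strong) (hs : s ∈ P.fixedS)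
    (hc : ∀ r : R, P.mul s (single 1 r) = P.mul (single 1 r) s)
    (hB : ∀ r t : R,
      P.mul (P.mul (single 1 r) s) (single 1 t) = P.mul (single 1 r) (P.mul s (single 1 t)))
    (v w : G →₀ R) : P.mul (P.mul v s) w = P.mul v (P.mul s w) := by
  have key : P.mulHom.comp (P.mulHom.flip s) = P.mulHom.compl₂ (P.mulHom s) :=
    addHom_ext fun a r => addHom_ext fun b t => by
      simp only [AddMonoidHom.comp_apply, AddMonoidHom.compl₂_apply, AddMonoidHom.flip_apply,
        mulHom_apply]
      rw [single_mul_mul_single_of_mem_fixedS hs, single_mul_mul_single_of_strong hP hs hc]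
      simp only [hB]
  exact DFunLike.congr_fun (DFunLike.congr_fun key v) w

end CommMonoid

end GDeriv

/-- Let `G` be commutative and `π` a strong `G`-derivation.  If
`s ∈ S^G`, then `s ∈ Z(S)` iff `s` commutes and associates with all elements
of `R`. -/
theorem stmt7 {R : Type*} [NonAssocRing R] {G : Type*} [CommMonoid G]
    (P : GDeriv R G) (hP : P.Strong) {s : G →₀ R} (hs : s ∈ P.fixedS) :
    s ∈ P.Z ↔
      (∀ r : R, P.commS s (Finsupp.single 1 r) = 0) ∧
      (∀ r t : R,
        P.assocS s (Finsupp.single 1 r) (Finsupp.single 1 t) = 0 ∧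
        P.assocS (Finsupp.single 1 r) s (Finsupp.single 1 t) = 0 ∧
        P.assocS (Finsupp.single 1 r) (Finsupp.single 1 t) s = 0) := by
  refine ⟨fun ⟨hC, ⟨hl, hm⟩, hr⟩ =>
    ⟨fun r => sub_eq_zero.2 (hC _), fun r t => ⟨hl _ _, hm _ _, hr _ _⟩⟩,
    fun ⟨hcommR, hassocR⟩ => ?_⟩
  have hc (r : R) := sub_eq_zero.1 (hcommR r)
  have hcomm := GDeriv.mul_comm_of_mem_fixedS hs hc
  have hright := GDeriv.mul_mul_right_comm_of_mem_fixedS hs hc fun r t =>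
    sub_eq_zero.1 (hassocR r t).1
  have hmid := GDeriv.mul_mul_assoc_of_mem_fixedS hP hs hc fun r t =>
    sub_eq_zero.1 (hassocR r t).2.1
  refine ⟨hcomm, ⟨fun v w => ?_, fun v w => sub_eq_zero.2 (hmid v w)⟩, fun v w => ?_⟩
  · rw [GDeriv.assocS, hcomm, hcomm, hright, sub_self]
  · rw [GDeriv.assocS, ← hcomm w, ← hmid, hright, sub_self]
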